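/- Let u be a composition (possibly empty) and v a nonempty composition, and let |u|, |v| denote the sums of their parts. Then P(u ⊕ (3) ⊕ v) = C(|u|+|v|+3, |u|+1) · P(u ⊕ (1)) · P((2) ⊕ v), where C(m, r) is the binomial coefficient (m choose r). -/

import Mathlib

/-- `i` (1-based, with `1 < i < n`) is a peak of the permutation `σ` of `{1,…,n}`
(represented as a permutation of `Fin n`, position `j` (1-based) being index `j-1`). -/
def IsPeak {n : ℕ} (σ : Equiv.Perm (Fin n)) (i : ℕ) : Prop :=
  ∃ (h₂ : 2 ≤ i) (h₃ : i < n),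
    σ ⟨i - 2, by omega⟩ < σ ⟨i - 1, by omega⟩ ∧ σ ⟨i, h₃⟩ < σ ⟨i - 1, by omega⟩

open Classical in
/-- The peak set of a permutation of `{1,…,n}` (as a set of 1-based positions). -/
noncomputable def peakSet {n : ℕ} (σ : Equiv.Perm (Fin n)) : Finset ℕ :=
  (Finset.range n).filter (fun i => IsPeak σ i)

/-- `P(S;n)`: the number of permutations of `{1,…,n}` with peak set `S`. -/
noncomputable def numPeakSet (n : ℕ) (S : Finset ℕ) : ℕ :=
  Nat.card {σ : Equiv.Perm (Fin n) // peakSet σ = S}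

/-- `c` is a composition of `n`: a list of positive integers summing to `n`. -/
def IsComposition (n : ℕ) (c : List ℕ) : Prop :=
  (∀ x ∈ c, 0 < x) ∧ c.sum = n

/-- The set `S(c)` of proper partial sums of the composition `c`. -/
def compPeaks (c : List ℕ) : Finset ℕ :=
  (Finset.range (c.length - 1)).image (fun i => (c.take (i + 1)).sum)

/-- `P(c)`: the number of permutations of `{1,…,|c|}` whose peak set is `S(c)`. -/
noncomputable def Pcomp (c : List ℕ) : ℕ :=
  numPeakSet c.sum (compPeaks c)

/-- A composition is maximal if `P(b) ≤ P(c)` for every composition `b` of the same size. -/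
def IsMaximal (c : List ℕ) : Prop :=
  ∀ b : List ℕ, IsComposition c.sum b → Pcomp b ≤ Pcomp c

/-!
A permutation of `[n₁ + n₂]` is the same as the set `A` of its first `n₁` values together with
the standardisations `σ₁`, `σ₂` of its two blocks; this accounts for the factor
`C(n₁ + n₂, n₁) · n₁! · n₂! = (n₁ + n₂)!`. Peaks inside a block are the peaks of its
standardisation. With `n₁ = |u| + 1`, the prescribed peaks of `σ₁` at `n₁ - 1` (if `u ≠ ε`) and of
`σ₂` at `2` make `σ₁` end with a descent and `σ₂` start with an ascent, so neither position next to
the boundary can be a peak, and the peak condition on the whole permutation splits into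
independent conditions on `σ₁` and `σ₂`.
-/

open Finset Equiv

lemma IsPeak.two_le {n i : ℕ} {σ : Perm (Fin n)} (h : IsPeak σ i) : 2 ≤ i := h.1

lemma IsPeak.lt {n i : ℕ} {σ : Perm (Fin n)} (h : IsPeak σ i) : i < n := h.2.1

lemma mem_peakSet {n i : ℕ} {σ : Perm (Fin n)} : i ∈ peakSet σ ↔ IsPeak σ i := by
  classical
  simp only [peakSet, mem_filter, mem_range, and_iff_right_iff_imp]
  exact IsPeak.lt

lemma isPeak_iff_of_val {n i : ℕ} (σ : Perm (Fin n)) (a b c : Fin n)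
    (ha : (a : ℕ) + 2 = i) (hb : (b : ℕ) + 1 = i) (hc : (c : ℕ) = i) :
    IsPeak σ i ↔ σ a < σ b ∧ σ c < σ b := by
  have e₁ : ∀ h, (⟨i - 2, h⟩ : Fin n) = a := fun _ => Fin.ext (by simp; omega)
  have e₂ : ∀ h, (⟨i - 1, h⟩ : Fin n) = b := fun _ => Fin.ext (by simp; omega)
  have e₃ : ∀ h, (⟨i, h⟩ : Fin n) = c := fun _ => Fin.ext hc.symm
  simp only [IsPeak, e₁, e₂, e₃]
  exact ⟨fun ⟨_, _, h⟩ => h, fun h => ⟨by omega, by omega, h⟩⟩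

lemma IsPeak.not_isPeak_add_one {n i : ℕ} {σ : Perm (Fin n)} (h : IsPeak σ i) :
    ¬ IsPeak σ (i + 1) := by
  intro h'
  have := h.two_le
  have := h'.lt
  rw [isPeak_iff_of_val σ ⟨i - 2, by omega⟩ ⟨i - 1, by omega⟩ ⟨i, by omega⟩ (by simp; omega)
    (by simp; omega) rfl] at h
  rw [isPeak_iff_of_val σ ⟨i - 1, by omega⟩ ⟨i, by omega⟩ ⟨i + 1, by omega⟩ (by simp; omega)
    (by simp) rfl] at h'
  exact lt_asymm h.2 h'.1

lemma isPeak_add_iff {N n k i : ℕ} {τ : Perm (Fin N)} {σ : Perm (Fin n)} {e : Fin n → Fin N}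
    (he : ∀ j, (e j : ℕ) = k + j) (hτσ : ∀ a b, τ (e a) < τ (e b) ↔ σ a < σ b)
    (hi2 : 2 ≤ i) (hi : i < n) :
    IsPeak τ (k + i) ↔ IsPeak σ i := by
  rw [isPeak_iff_of_val τ (e ⟨i - 2, by omega⟩) (e ⟨i - 1, by omega⟩) (e ⟨i, hi⟩)
      (by rw [he]; simp; omega) (by rw [he]; simp; omega) (by rw [he]),
    isPeak_iff_of_val σ ⟨i - 2, by omega⟩ ⟨i - 1, by omega⟩ ⟨i, hi⟩ (by simp; omega)
      (by simp; omega) rfl, hτσ, hτσ]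

section Shuffle

variable {n₁ n₂ : ℕ}

lemma card_compl_of_card_eq {A : Finset (Fin (n₁ + n₂))} (hA : A.card = n₁) : Aᶜ.card = n₂ := by
  rw [card_compl, hA, Fintype.card_fin, Nat.add_sub_cancel_left]

/-- The permutation whose first `n₁` values form the set `A` and are in the same relative order
as `σ₁`, while its last `n₂` values are in the same relative order as `σ₂`. -/
noncomputable def shuffle (A : {A : Finset (Fin (n₁ + n₂)) // A.card = n₁})
    (σ₁ : Perm (Fin n₁)) (σ₂ : Perm (Fin n₂)) : Perm (Fin (n₁ + n₂)) :=
  finSumFinEquiv.symm.trans <|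
    (Equiv.sumCongr (σ₁.trans (A.1.orderIsoOfFin A.2).toEquiv)
      (σ₂.trans ((A.1ᶜ.orderIsoOfFin (card_compl_of_card_eq A.2)).toEquiv.trans
        (Equiv.subtypeEquivRight fun _ => mem_compl)))).trans
    (Equiv.sumCompl (· ∈ A.1))

variable (A : {A : Finset (Fin (n₁ + n₂)) // A.card = n₁}) (σ₁ : Perm (Fin n₁))
  (σ₂ : Perm (Fin n₂))

lemma shuffle_castAdd (i : Fin n₁) :
    shuffle A σ₁ σ₂ (Fin.castAdd n₂ i) = A.1.orderEmbOfFin A.2 (σ₁ i) := by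
  simp [shuffle]

lemma shuffle_natAdd (j : Fin n₂) :
    shuffle A σ₁ σ₂ (Fin.natAdd n₁ j) =
      A.1ᶜ.orderEmbOfFin (card_compl_of_card_eq A.2) (σ₂ j) := by
  simp [shuffle]

lemma mem_peakSet_shuffle_of_lt {i : ℕ} (hi : i < n₁) :
    i ∈ peakSet (shuffle A σ₁ σ₂) ↔ i ∈ peakSet σ₁ := by
  simp only [mem_peakSet]
  by_cases hi2 : 2 ≤ i
  · simpa using isPeak_add_iff (k := 0) (fun j => (Fin.val_castAdd n₂ j).trans (zero_add _).symm)
      (fun a b => by simp [shuffle_castAdd]) hi2 hi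
  · exact iff_of_false (fun h => hi2 h.two_le) (fun h => hi2 h.two_le)

lemma add_mem_peakSet_shuffle {i : ℕ} (hi2 : 2 ≤ i) :
    n₁ + i ∈ peakSet (shuffle A σ₁ σ₂) ↔ i ∈ peakSet σ₂ := by
  simp only [mem_peakSet]
  by_cases hi : i < n₂
  · exact isPeak_add_iff (fun j => Fin.val_natAdd n₁ j) (fun a b => by simp [shuffle_natAdd])
      hi2 hi
  · exact iff_of_false (fun h => hi (by have := h.lt; omega)) (fun h => hi h.lt)

lemma image_shuffle_castAdd :
    univ.image (fun i => shuffle A σ₁ σ₂ (Fin.castAdd n₂ i)) = A.1 := by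
  have h := image_orderEmbOfFin_univ A.1 A.2
  rw [← image_univ_equiv σ₁, image_image] at h
  simpa only [shuffle_castAdd, Function.comp_def] using h

lemma shuffle_injective :
    Function.Injective fun t : {A : Finset (Fin (n₁ + n₂)) // A.card = n₁} ×
      Perm (Fin n₁) × Perm (Fin n₂) => shuffle t.1 t.2.1 t.2.2 := by
  rintro ⟨A, σ₁, σ₂⟩ ⟨B, τ₁, τ₂⟩ h
  simp only at h
  obtain rfl : A = B := Subtype.ext <| by
    rw [← image_shuffle_castAdd A σ₁ σ₂, ← image_shuffle_castAdd B τ₁ τ₂, h]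
  have h₁ : σ₁ = τ₁ := Equiv.ext fun i => by
    simpa [shuffle_castAdd] using congrArg (· (Fin.castAdd n₂ i)) h
  have h₂ : σ₂ = τ₂ := Equiv.ext fun j => by
    simpa [shuffle_natAdd] using congrArg (· (Fin.natAdd n₁ j)) h
  rw [h₁, h₂]

lemma shuffle_bijective :
    Function.Bijective fun t : {A : Finset (Fin (n₁ + n₂)) // A.card = n₁} ×
      Perm (Fin n₁) × Perm (Fin n₂) => shuffle t.1 t.2.1 t.2.2 := by
  refine (Fintype.bijective_iff_injective_and_card _).2 ⟨shuffle_injective, ?_⟩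
  simp only [Fintype.card_prod, Fintype.card_finset_len, Fintype.card_perm, Fintype.card_fin]
  rw [← mul_assoc, ← Nat.choose_mul_factorial_mul_factorial (Nat.le_add_right n₁ n₂),
    Nat.add_sub_cancel_left]

/-- A final descent of `σ₁` and an initial ascent of `σ₂` rule out peaks at the two positions
`n₁`, `n₁ + 1` next to the block boundary. -/
lemma peakSet_shuffle (h₁ : n₁ = 1 ∨ n₁ - 1 ∈ peakSet σ₁) (h₂ : 2 ∈ peakSet σ₂) :
    peakSet (shuffle A σ₁ σ₂) = peakSet σ₁ ∪ (peakSet σ₂).image (n₁ + ·) := by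
  have not_mem₀ : n₁ ∉ peakSet (shuffle A σ₁ σ₂) := by
    rw [mem_peakSet]
    rcases h₁ with rfl | h₁
    · exact fun h => by have := h.two_le; omega
    · have := (mem_peakSet.1 h₁).two_le
      have hp := mem_peakSet.1 ((mem_peakSet_shuffle_of_lt A σ₁ σ₂ (by omega)).2 h₁)
      simpa [Nat.sub_add_cancel (by omega : 1 ≤ n₁)] using hp.not_isPeak_add_one
  have not_mem₁ : n₁ + 1 ∉ peakSet (shuffle A σ₁ σ₂) := fun h =>
    (mem_peakSet.1 h).not_isPeak_add_one
      (mem_peakSet.1 ((add_mem_peakSet_shuffle A σ₁ σ₂ le_rfl).2 h₂))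
  ext i
  simp only [mem_union, mem_image]
  rcases lt_or_ge i n₁ with hi | hi
  · rw [mem_peakSet_shuffle_of_lt A σ₁ σ₂ hi]
    exact (or_iff_left fun ⟨j, _, hj⟩ => by omega).symm
  obtain ⟨j, rfl⟩ := Nat.exists_eq_add_of_le hi
  have not_mem_σ₁ : n₁ + j ∉ peakSet σ₁ := fun h => by have := (mem_peakSet.1 h).lt; omega
  rcases lt_or_ge j 2 with hj | hj
  · refine iff_of_false ?_ ?_
    · interval_cases j
      exacts [not_mem₀, not_mem₁]
    · rintro (h | ⟨k, hk, hkj⟩)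
      · exact not_mem_σ₁ h
      · have := (mem_peakSet.1 hk).two_le; omega
  · rw [add_mem_peakSet_shuffle A σ₁ σ₂ hj, or_iff_right not_mem_σ₁]
    exact ⟨fun h => ⟨j, h, rfl⟩, fun ⟨k, hk, hkj⟩ => by rwa [← Nat.add_left_cancel hkj]⟩

lemma peakSet_shuffle_eq_iff {S₁ S₂ : Finset ℕ} (hS₁ : ∀ i ∈ S₁, i < n₁)
    (hS₂ : ∀ i ∈ S₂, 2 ≤ i) (h₁ : n₁ = 1 ∨ n₁ - 1 ∈ S₁) (h₂ : 2 ∈ S₂) :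
    peakSet (shuffle A σ₁ σ₂) = S₁ ∪ S₂.image (n₁ + ·) ↔
      peakSet σ₁ = S₁ ∧ peakSet σ₂ = S₂ := by
  refine ⟨fun h => ⟨?_, ?_⟩, fun ⟨e₁, e₂⟩ => ?_⟩
  · ext i
    by_cases hi : i < n₁
    · rw [← mem_peakSet_shuffle_of_lt A σ₁ σ₂ hi, h, mem_union, mem_image,
        or_iff_left fun ⟨j, hj, hji⟩ => by have := hS₂ j hj; omega]
    · exact iff_of_false (fun h => hi (mem_peakSet.1 h).lt) (fun h => hi (hS₁ i h))
  · ext i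
    by_cases hi : 2 ≤ i
    · rw [← add_mem_peakSet_shuffle A σ₁ σ₂ hi, h, mem_union, mem_image,
        or_iff_right fun h => by have := hS₁ _ h; omega]
      exact ⟨fun ⟨k, hk, hki⟩ => by rwa [← Nat.add_left_cancel hki], fun h => ⟨i, h, rfl⟩⟩
    · exact iff_of_false (fun h => hi (mem_peakSet.1 h).two_le) (fun h => hi (hS₂ i h))
  · subst e₁ e₂
    exact peakSet_shuffle A σ₁ σ₂ h₁ h₂

end Shuffle

theorem numPeakSet_add {n₁ n₂ : ℕ} {S₁ S₂ : Finset ℕ} (hS₁ : ∀ i ∈ S₁, i < n₁)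
    (hS₂ : ∀ i ∈ S₂, 2 ≤ i) (h₁ : n₁ = 1 ∨ n₁ - 1 ∈ S₁) (h₂ : 2 ∈ S₂) :
    numPeakSet (n₁ + n₂) (S₁ ∪ S₂.image (n₁ + ·)) =
      (n₁ + n₂).choose n₁ * numPeakSet n₁ S₁ * numPeakSet n₂ S₂ := by
  let e : {σ : Perm (Fin (n₁ + n₂)) // peakSet σ = S₁ ∪ S₂.image (n₁ + ·)} ≃
      {A : Finset (Fin (n₁ + n₂)) // A.card = n₁} × {σ₁ : Perm (Fin n₁) // peakSet σ₁ = S₁} ×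
        {σ₂ : Perm (Fin n₂) // peakSet σ₂ = S₂} :=
    ((Equiv.ofBijective _ shuffle_bijective).subtypeEquiv fun t =>
      (peakSet_shuffle_eq_iff t.1 t.2.1 t.2.2 hS₁ hS₂ h₁ h₂).symm).symm.trans
    { toFun := fun t => (t.1.1, ⟨t.1.2.1, t.2.1⟩, ⟨t.1.2.2, t.2.2⟩)
      invFun := fun x => ⟨(x.1, x.2.1, x.2.2), x.2.1.2, x.2.2.2⟩ }
  rw [numPeakSet, numPeakSet, numPeakSet, Nat.card_congr e, Nat.card_prod, Nat.card_prod,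
    Nat.card_eq_fintype_card (α := {A : Finset _ // _}), Fintype.card_finset_len,
    Fintype.card_fin, mul_assoc]

lemma compPeaks_singleton (a : ℕ) : compPeaks [a] = ∅ := rfl

lemma compPeaks_cons (a : ℕ) {c : List ℕ} (hc : c ≠ []) :
    compPeaks (a :: c) = insert a ((compPeaks c).image (a + ·)) := by
  obtain ⟨m, hm⟩ : ∃ m, c.length = m + 1 :=
    Nat.exists_eq_succ_of_ne_zero (List.length_pos_iff.2 hc).ne'
  simp [compPeaks, hm, range_add_one', map_eq_image, image_image, Function.comp_def,
    List.take_succ_cons]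
  rfl

lemma compPeaks_append_add_cons (u : List ℕ) (a b : ℕ) {v : List ℕ} (hv : v ≠ []) :
    compPeaks (u ++ (a + b) :: v) =
      compPeaks (u ++ [a]) ∪ (compPeaks (b :: v)).image (u.sum + a + ·) := by
  induction u with
  | nil =>
    simp [compPeaks_singleton, compPeaks_cons _ hv, image_image, Function.comp_def, add_assoc]
  | cons x u ih =>
    rw [List.cons_append, List.cons_append, compPeaks_cons _ (by simp),
      compPeaks_cons _ (by simp), ih]
    simp [image_union, image_image, Function.comp_def, add_assoc]

lemma le_sum_of_mem_compPeaks_append_singleton {u : List ℕ} {a i : ℕ}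
    (hi : i ∈ compPeaks (u ++ [a])) : i ≤ u.sum := by
  induction u generalizing i with
  | nil => simp [compPeaks_singleton] at hi
  | cons x u ih =>
    rw [List.cons_append, compPeaks_cons _ (by simp), mem_insert, mem_image] at hi
    rcases hi with rfl | ⟨j, hj, rfl⟩
    · simp
    · simpa using ih hj

lemma sum_mem_compPeaks_append_singleton {u : List ℕ} (hu : u ≠ []) (a : ℕ) :
    u.sum ∈ compPeaks (u ++ [a]) := by
  induction u with
  | nil => exact absurd rfl hu
  | cons x u ih =>
    rw [List.cons_append, compPeaks_cons _ (by simp)]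
    rcases eq_or_ne u [] with rfl | hu'
    · simp
    · simpa using Or.inr (ih hu')

theorem separation_lemma_general (u v : List ℕ) (hvne : v ≠ []) :
    Pcomp (u ++ [3] ++ v) =
      Nat.choose (u.sum + v.sum + 3) (u.sum + 1) * Pcomp (u ++ [1]) * Pcomp ([2] ++ v) := by
  have hsplit : compPeaks (u ++ [3] ++ v) =
      compPeaks (u ++ [1]) ∪ (compPeaks ([2] ++ v)).image ((u ++ [1]).sum + ·) := by
    simpa using compPeaks_append_add_cons u 1 2 hvne
  have hsum : (u ++ [3] ++ v).sum = (u ++ [1]).sum + ([2] ++ v).sum := by simp; omega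
  have hpeaks₂ : compPeaks (2 :: v) = insert 2 ((compPeaks v).image (2 + ·)) :=
    compPeaks_cons 2 hvne
  rw [Pcomp, hsum, hsplit, numPeakSet_add]
  · simp only [Pcomp, List.sum_append, List.sum_singleton]
    congr 3
    omega
  · exact fun i hi => by
      simpa using Nat.lt_succ_of_le (le_sum_of_mem_compPeaks_append_singleton hi)
  · simp [hpeaks₂]
  · rcases eq_or_ne u [] with rfl | hu
    · exact Or.inl rfl
    · exact Or.inr (by simpa using sum_mem_compPeaks_append_singleton hu 1)
  · simp [hpeaks₂]

theorem separation_lemma (u v : List ℕ) (hu : ∀ x ∈ u, 0 < x) (hv : ∀ x ∈ v, 0 < x)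
    (hvne : v ≠ []) :
    Pcomp (u ++ [3] ++ v) =
      Nat.choose (u.sum + v.sum + 3) (u.sum + 1) * Pcomp (u ++ [1]) * Pcomp ([2] ++ v) :=
  separation_lemma_general u v hvne
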